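/- For N ≥ 2 and any P with 1/4 < P^N·Σ_{k=0}^{N} 3^k·binomial(N,k) and P < 1/3, the optimal correlated N-run score S_N(P) (the value of the linear program maximizing (8/N)·Σ_k k·p_k·3^k·binomial(N,k) − 4 subject to Σ_k p_k·3^k·binomial(N,k) = 1 and 0 ≤ p_k ≤ P^N) is at least the repeated one-shot score 24P − 4, with strict inequality for some P ∈ (1/4, 1/3). -/

import Mathlib

/-!
The repeated one-shot attack `p k = P ^ k * (1 - 3 * P) ^ (N - k)` is feasible for
`1/4 ≤ P ≤ 1/3`, and since the mean of a binomial law is `N * 3P` it scores `24 * P - 4`.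
For `1/4 < P < 1/3` it is not optimal: its weight at `k = N - 1` is `P ^ (N - 1) * (1 - 3P) < P ^ N`
while its weight at `k = 0` is positive, so moving a little normalised mass from `k = 0` to
`k = N - 1` keeps the linear program feasible and strictly raises the score.
-/

open Finset

/-- The optimal value of the N-run correlated CHSH linear program with
measurement-dependence bound `P`. -/
noncomputable def chshLPValue (N : ℕ) (P : ℝ) : ℝ :=
  sSup {S : ℝ | ∃ p : ℕ → ℝ,
    (∀ k, 0 ≤ p k ∧ p k ≤ P ^ N) ∧
    (∑ k ∈ Finset.range (N + 1), p k * 3 ^ k * (N.choose k : ℝ) = 1) ∧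
    S = (8 / N) * ∑ k ∈ Finset.range (N + 1),
          (k : ℝ) * p k * 3 ^ k * (N.choose k : ℝ) - 4}

theorem sum_range_mul_pow_mul_pow_mul_choose {R : Type*} [CommSemiring R] (x y : R) (n : ℕ) :
    ∑ k ∈ range (n + 1), (k : R) * (x ^ k * y ^ (n - k) * (n.choose k : R)) =
      n * x * (x + y) ^ (n - 1) := by
  rcases n with _ | n
  · simp
  rw [sum_range_succ', add_pow, mul_sum]
  simp only [Nat.cast_zero, zero_mul, add_zero, Nat.cast_add, Nat.cast_one, Nat.add_sub_cancel]
  refine sum_congr rfl fun k _ => ?_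
  have hchoose : ((n + 1).choose (k + 1) : R) * (k + 1) = (n + 1) * n.choose k := by
    exact_mod_cast congrArg (Nat.cast : ℕ → R) (Nat.add_one_mul_choose_eq n k).symm
  calc ((k : R) + 1) * (x ^ (k + 1) * y ^ (n + 1 - (k + 1)) * ((n + 1).choose (k + 1) : R))
      = x ^ (k + 1) * y ^ (n - k) * (((n + 1).choose (k + 1) : R) * (k + 1)) := by
        rw [Nat.add_sub_add_right]; ring
    _ = (n + 1) * x * (x ^ k * y ^ (n - k) * n.choose k) := by rw [hchoose]; ring

theorem sum_add_ite_sub_ite_mul {R : Type*} [Ring R] {s : Finset ℕ} {i j : ℕ} (hi : i ∈ s)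
    (hj : j ∈ s) (q f : ℕ → R) (a b : R) :
    ∑ k ∈ s, (q k + (if k = j then a else 0) - (if k = i then b else 0)) * f k =
      ∑ k ∈ s, q k * f k + a * f j - b * f i := by
  simp only [sub_mul, add_mul, ite_mul, zero_mul, sum_sub_distrib, sum_add_distrib, sum_ite_eq',
    hi, hj, if_true]

namespace CHSH

def IsFeasible (N : ℕ) (P : ℝ) (p : ℕ → ℝ) : Prop :=
  (∀ k, 0 ≤ p k ∧ p k ≤ P ^ N) ∧ ∑ k ∈ range (N + 1), p k * 3 ^ k * (N.choose k : ℝ) = 1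

noncomputable def score (N : ℕ) (p : ℕ → ℝ) : ℝ :=
  (8 / N) * ∑ k ∈ range (N + 1), (k : ℝ) * p k * 3 ^ k * (N.choose k : ℝ) - 4

variable {N : ℕ} {P : ℝ} {p : ℕ → ℝ}

lemma score_le_four (hp : IsFeasible N P p) : score N p ≤ 4 := by
  have hsum : ∑ k ∈ range (N + 1), (k : ℝ) * p k * 3 ^ k * (N.choose k : ℝ) ≤ N := by
    calc ∑ k ∈ range (N + 1), (k : ℝ) * p k * 3 ^ k * (N.choose k : ℝ)
        ≤ ∑ k ∈ range (N + 1), (N : ℝ) * (p k * 3 ^ k * (N.choose k : ℝ)) := by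
          refine sum_le_sum fun k hk => ?_
          have hkN : (k : ℝ) ≤ N := by exact_mod_cast Nat.lt_succ_iff.mp (mem_range.mp hk)
          have := (hp.1 k).1
          rw [← mul_assoc, ← mul_assoc]
          gcongr
      _ = N := by rw [← mul_sum, hp.2, mul_one]
  have h8 : 8 / (N : ℝ) * N ≤ 8 := by
    rcases eq_or_ne (N : ℝ) 0 with h | h
    · simp [h]
    · rw [div_mul_cancel₀ _ h]
  unfold score
  nlinarith [show (0 : ℝ) ≤ 8 / N by positivity]

lemma score_le_chshLPValue (hp : IsFeasible N P p) : score N p ≤ chshLPValue N P :=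
  le_csSup ⟨4, by rintro S ⟨q, hq₀, hq₁, rfl⟩; exact score_le_four ⟨hq₀, hq₁⟩⟩ ⟨p, hp.1, hp.2, rfl⟩

lemma exists_isFeasible_score_gt {q : ℕ → ℝ} (hq : IsFeasible N P q) {i j : ℕ} (hij : i < j)
    (hjN : j ≤ N) (hi : 0 < q i) (hj : q j < P ^ N) :
    ∃ p, IsFeasible N P p ∧ score N q < score N p := by
  set c : ℕ → ℝ := fun k => 3 ^ k * N.choose k
  have hc_pos : ∀ k ≤ N, 0 < c k := fun k hk => by
    have := Nat.choose_pos hk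
    positivity
  set ε := min (q i * c i) ((P ^ N - q j) * c j)
  have hε : 0 < ε :=
    lt_min (mul_pos hi (hc_pos i (by omega))) (mul_pos (by linarith) (hc_pos j hjN))
  set p : ℕ → ℝ := fun k => q k + (if k = j then ε / c j else 0) - (if k = i then ε / c i else 0)
  have hsum : ∀ f : ℕ → ℝ, ∑ k ∈ range (N + 1), p k * f k =
      ∑ k ∈ range (N + 1), q k * f k + ε / c j * f j - ε / c i * f i := fun f =>
    sum_add_ite_sub_ite_mul (mem_range.2 (by omega)) (mem_range.2 (by omega)) q f _ _
  have hεj : ε / c j ≤ P ^ N - q j :=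
    div_le_of_le_mul₀ (hc_pos j hjN).le (by linarith) (min_le_right _ _)
  have hεi : ε / c i ≤ q i := div_le_of_le_mul₀ (hc_pos i (by omega)).le hi.le (min_le_left _ _)
  have hεj₀ : 0 ≤ ε / c j := by have := hc_pos j hjN; positivity
  have hεi₀ : 0 ≤ ε / c i := by have := hc_pos i (by omega); positivity
  have hcancel : ∀ k ≤ N, ε / c k * c k = ε := fun k hk => div_mul_cancel₀ _ (hc_pos k hk).ne'
  refine ⟨p, ⟨fun k => ?_, ?_⟩, ?_⟩
  · obtain ⟨hk₀, hk₁⟩ := hq.1 k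
    simp only [p]
    split_ifs <;> subst_vars <;> first | omega | constructor <;> linarith
  · have hq₁ : ∑ k ∈ range (N + 1), q k * c k = 1 := by simp only [c, ← mul_assoc]; exact hq.2
    simp only [mul_assoc]
    rw [hsum c, hcancel j hjN, hcancel i (by omega), hq₁]
    ring
  · have hmoment : ∀ r : ℕ → ℝ, ∑ k ∈ range (N + 1), (k : ℝ) * r k * 3 ^ k * (N.choose k : ℝ) =
        ∑ k ∈ range (N + 1), r k * (k * c k) := fun r => sum_congr rfl fun k _ => by ring
    have hN : (0 : ℝ) < N := by exact_mod_cast (Nat.zero_le i).trans_lt (hij.trans_le hjN)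
    have hgain : ε / c j * (j * c j) - ε / c i * (i * c i) = ε * (j - i) := by
      rw [mul_left_comm, hcancel j hjN, mul_left_comm, hcancel i (by omega)]
      ring
    have hji : (i : ℝ) < j := by exact_mod_cast hij
    simp only [score, hmoment, hsum, add_sub_assoc, hgain]
    have : 0 < 8 / (N : ℝ) * (ε * (j - i)) := by
      have := sub_pos.2 hji
      positivity
    rw [mul_add]
    linarith

def repeatedOneShot (N : ℕ) (P : ℝ) (k : ℕ) : ℝ := P ^ k * (1 - 3 * P) ^ (N - k)

lemma repeatedOneShot_isFeasible (hP₁ : 1 / 4 ≤ P) (hP₂ : P ≤ 1 / 3) :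
    IsFeasible N P (repeatedOneShot N P) := by
  have h3P : 0 ≤ 1 - 3 * P := by linarith
  refine ⟨fun k => ⟨by unfold repeatedOneShot; positivity, ?_⟩, ?_⟩
  · rcases le_or_gt k N with hk | hk
    · calc repeatedOneShot N P k ≤ P ^ k * P ^ (N - k) := by
            unfold repeatedOneShot; gcongr; linarith
        _ = P ^ N := by rw [← pow_add, Nat.add_sub_cancel' hk]
    · rw [repeatedOneShot, Nat.sub_eq_zero_of_le hk.le, pow_zero, mul_one]
      exact pow_le_pow_of_le_one (by linarith) (by linarith) hk.le
  · calc ∑ k ∈ range (N + 1), repeatedOneShot N P k * 3 ^ k * (N.choose k : ℝ)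
        = ∑ k ∈ range (N + 1), (3 * P) ^ k * (1 - 3 * P) ^ (N - k) * (N.choose k : ℝ) :=
          sum_congr rfl fun k _ => by rw [repeatedOneShot, mul_pow]; ring
      _ = 1 := by rw [← add_pow]; norm_num

lemma score_repeatedOneShot (hN : 1 ≤ N) : score N (repeatedOneShot N P) = 24 * P - 4 := by
  have hmean := sum_range_mul_pow_mul_pow_mul_choose (3 * P) (1 - 3 * P) N
  rw [add_sub_cancel, one_pow, mul_one] at hmean
  have hterm : ∀ k : ℕ, (k : ℝ) * repeatedOneShot N P k * 3 ^ k * (N.choose k : ℝ) =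
      k * ((3 * P) ^ k * (1 - 3 * P) ^ (N - k) * (N.choose k : ℝ)) := fun k => by
    rw [repeatedOneShot, mul_pow]; ring
  have hN' : (N : ℝ) ≠ 0 := by positivity
  simp only [score, hterm, hmean]
  field_simp
  ring

lemma repeatedOneShot_zero_pos (hP : P < 1 / 3) : 0 < repeatedOneShot N P 0 := by
  have : 0 < 1 - 3 * P := by linarith
  rw [repeatedOneShot]
  positivity

lemma repeatedOneShot_sub_one_lt (hN : N ≠ 0) (hP : 1 / 4 < P) :
    repeatedOneShot N P (N - 1) < P ^ N := by
  have : 0 < P ^ (N - 1) := by positivity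
  rw [repeatedOneShot, Nat.sub_sub_self (Nat.one_le_iff_ne_zero.2 hN), pow_one,
    ← pow_sub_one_mul hN]
  gcongr
  linarith

end CHSH

open CHSH in
theorem correlated_attack_dominates (N : ℕ) (hN : 2 ≤ N) :
    (∀ P : ℝ, 1/4 < P → P < 1/3 → 24 * P - 4 ≤ chshLPValue N P) ∧
    ∃ P : ℝ, 1/4 < P ∧ P < 1/3 ∧ 24 * P - 4 < chshLPValue N P := by
  have key : ∀ P : ℝ, 1/4 < P → P < 1/3 → 24 * P - 4 < chshLPValue N P := by
    intro P hP₁ hP₂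
    obtain ⟨p, hp, hgt⟩ := exists_isFeasible_score_gt
      (repeatedOneShot_isFeasible hP₁.le hP₂.le) (by omega : 0 < N - 1) (Nat.sub_le N 1)
      (repeatedOneShot_zero_pos hP₂) (repeatedOneShot_sub_one_lt (by omega) hP₁)
    calc 24 * P - 4 = score N (repeatedOneShot N P) := (score_repeatedOneShot (by omega)).symm
      _ < score N p := hgt
      _ ≤ chshLPValue N P := score_le_chshLPValue hp
  exact ⟨fun P hP₁ hP₂ => (key P hP₁ hP₂).le, 3 / 10, by norm_num, by norm_num,
    key _ (by norm_num) (by norm_num)⟩
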